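/- Let G = (V, E) be a finite simple undirected graph with N = |V| ≥ 3, let B ⊆ E, let t = ⌊|B|/2⌋, and let W_{G,B} be the workflow authorization policy constructed from (G, B). Then the following are equivalent: (i) for every D ⊆ B with |D| ≤ |B|/2, the graph G_D = (V, E ∖ D) has a Hamiltonian cycle; (ii) W_{G,B} is statically resilient for budget t. -/

import Mathlib

/-- A workflow authorization policy `W = (S, ≼, U, A, C)`:
steps `S`, an ordering relation `ord` (the partial order `≼`), users `U`,
a step authorization relation `A ⊆ S × U`, and a set `C` of constraints.
A constraint is a pair `(T, Θ)` where `T ⊆ S` and `Θ` is a set of functions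
from `T` to `U` (represented as `σ → Option υ` with domain exactly `T`). -/
structure WAP (σ υ : Type) where
  S : Finset σ
  ord : σ → σ → Prop
  U : Finset υ
  A : Set (σ × υ)
  C : Set (Finset σ × Set (σ → Option υ))

namespace WAP

variable {σ υ : Type} [DecidableEq σ] [DecidableEq υ]

/-- Well-formedness: `ord` is a partial order on `S`, `A ⊆ S × U`, and every
constraint `(T, Θ)` has `T ⊆ S` and `Θ` a set of functions from `T` to `U`. -/
def WellFormed (W : WAP σ υ) : Prop :=
  (∀ s ∈ W.S, W.ord s s) ∧
  (∀ s₁ ∈ W.S, ∀ s₂ ∈ W.S, W.ord s₁ s₂ → W.ord s₂ s₁ → s₁ = s₂) ∧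
  (∀ s₁ ∈ W.S, ∀ s₂ ∈ W.S, ∀ s₃ ∈ W.S, W.ord s₁ s₂ → W.ord s₂ s₃ → W.ord s₁ s₃) ∧
  (∀ p ∈ W.A, p.1 ∈ W.S ∧ p.2 ∈ W.U) ∧
  (∀ c ∈ W.C, c.1 ⊆ W.S ∧
    ∀ θ ∈ c.2, (∀ s, θ s ≠ none ↔ s ∈ c.1) ∧ ∀ s u, θ s = some u → u ∈ W.U)

/-- A partial plan: a partial function from `S` to `U` whose domain is
causally closed (if `s₁` is assigned and `s₂ ≺ s₁` then `s₂` is assigned). -/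
def IsPartialPlan (W : WAP σ υ) (θ : σ → Option υ) : Prop :=
  (∀ s u, θ s = some u → s ∈ W.S ∧ u ∈ W.U) ∧
  ∀ s₁ s₂, s₁ ∈ W.S → s₂ ∈ W.S → θ s₁ ≠ none → W.ord s₂ s₁ → s₂ ≠ s₁ → θ s₂ ≠ none

/-- Restriction of a partial plan to a set `T` of steps. -/
def restrictTo (θ : σ → Option υ) (T : Finset σ) : σ → Option υ :=
  fun s => if s ∈ T then θ s else none

/-- Validity of a (partial) plan: every assignment is authorized, and every
constraint whose step set is contained in the domain is satisfied. -/
def Valid (W : WAP σ υ) (θ : σ → Option υ) : Prop :=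
  (∀ s u, θ s = some u → (s, u) ∈ W.A) ∧
  ∀ c ∈ W.C, (∀ s ∈ c.1, θ s ≠ none) → restrictTo θ c.1 ∈ c.2

/-- A plan: a partial plan whose domain is all of `S`. -/
def IsPlan (W : WAP σ υ) (θ : σ → Option υ) : Prop :=
  W.IsPartialPlan θ ∧ ∀ s ∈ W.S, θ s ≠ none

def IsValidPlan (W : WAP σ υ) (θ : σ → Option υ) : Prop :=
  W.IsPlan θ ∧ W.Valid θ

/-- `θ` assigns no user from `Δ`. -/
def Avoids (θ : σ → Option υ) (Δ : Finset υ) : Prop :=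
  ∀ s u, θ s = some u → u ∉ Δ

/-- Static resiliency for budget `t`. -/
def StaticallyResilient (W : WAP σ υ) (t : ℕ) : Prop :=
  ∀ Δ : Finset υ, Δ ⊆ W.U → Δ.card ≤ t → ∃ θ, W.IsValidPlan θ ∧ Avoids θ Δ

/-- A move of Player 1: assign a user `u ∈ U ∖ Δ` to a not-yet-assigned step,
so that the result remains a causally closed partial plan and remains valid
(if the extension were invalid, Player 2 would win at once). -/
def P1Move (W : WAP σ υ) (Δ : Finset υ) (θ θ' : σ → Option υ) : Prop :=
  ∃ s u, s ∈ W.S ∧ θ s = none ∧ u ∈ W.U ∧ u ∉ Δ ∧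
    θ' = Function.update θ s (some u) ∧
    W.IsPartialPlan θ' ∧ W.Valid θ'

/-- A move of Player 2 in the one-shot resiliency game: either pass, or
(if it has not yet struck) strike, adding at most `t` users of `U` to `Δ`. -/
def OneShotP2Move (W : WAP σ υ) (t : ℕ) (Δ : Finset υ) (struck : Bool)
    (Δ' : Finset υ) (struck' : Bool) : Prop :=
  (Δ' = Δ ∧ struck' = struck) ∨
  (struck = false ∧ struck' = true ∧ Δ ⊆ Δ' ∧ Δ' ⊆ W.U ∧ (Δ' \ Δ).card ≤ t)

/-- Player 1 can force a win of the one-shot resiliency game within `n`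
more rounds, from the given configuration (`struck` records whether
Player 2 has already struck).  Player 1 has won once the (valid) partial
plan has been extended to a valid plan on all of `S`; otherwise, for every
move of Player 2 there must be a move of Player 1 from which Player 1 can
still force a win.  Since each round assigns one more step, the game from
the initial configuration lasts at most `|S|` rounds. -/
def OneShotWins (W : WAP σ υ) (t : ℕ) :
    ℕ → Finset υ → (σ → Option υ) → Bool → Prop
  | 0, _, θ, _ => (∀ s ∈ W.S, θ s ≠ none) ∧ W.IsPartialPlan θ ∧ W.Valid θ
  | n + 1, Δ, θ, struck =>
      ((∀ s ∈ W.S, θ s ≠ none) ∧ W.IsPartialPlan θ ∧ W.Valid θ) ∨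
      ((∃ s ∈ W.S, θ s = none) ∧
        ∀ Δ' struck', OneShotP2Move W t Δ struck Δ' struck' →
          ∃ θ', P1Move W Δ' θ θ' ∧ OneShotWins W t n Δ' θ' struck')

/-- One-shot resiliency for budget `t`: Player 1 wins the one-shot
resiliency game (from the initial configuration `(∅, ∅)`) no matter how
Player 2 plays. -/
def OneShotResilient (W : WAP σ υ) (t : ℕ) : Prop :=
  OneShotWins W t W.S.card ∅ (fun _ => none) false

/-- A move of Player 2 in the decremental resiliency game: add zero or more
users of `U` to `Δ`, subject to `|Δ| ≤ t` throughout. -/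
def DecP2Move (W : WAP σ υ) (t : ℕ) (Δ Δ' : Finset υ) : Prop :=
  Δ ⊆ Δ' ∧ Δ' ⊆ W.U ∧ Δ'.card ≤ t

/-- Player 1 can force a win of the decremental resiliency game within `n`
more rounds. -/
def DecWins (W : WAP σ υ) (t : ℕ) : ℕ → Finset υ → (σ → Option υ) → Prop
  | 0, _, θ => (∀ s ∈ W.S, θ s ≠ none) ∧ W.IsPartialPlan θ ∧ W.Valid θ
  | n + 1, Δ, θ =>
      ((∀ s ∈ W.S, θ s ≠ none) ∧ W.IsPartialPlan θ ∧ W.Valid θ) ∨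
      ((∃ s ∈ W.S, θ s = none) ∧
        ∀ Δ', DecP2Move W t Δ Δ' →
          ∃ θ', P1Move W Δ' θ θ' ∧ DecWins W t n Δ' θ')

/-- Decremental resiliency for budget `t`: Player 1 wins the decremental
resiliency game no matter how Player 2 plays. -/
def DecrementallyResilient (W : WAP σ υ) (t : ℕ) : Prop :=
  DecWins W t W.S.card ∅ (fun _ => none)

end WAP
section GraphConstruction

open WAP

variable {V : Type} [Fintype V] [DecidableEq V]

/-- A user of `W_{G,B}`: either a vertex user `(v, j)` or an edge user `(e, l)`. -/
abbrev UserGB (V : Type) := Sum (V × ℕ) (Sym2 V × ℕ)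

/-- The successor index modulo `N` (so `sv_{i+1}` after `sv_i`, wrapping around). -/
def nextFin {N : ℕ} (i : Fin N) : Fin N :=
  ⟨(i.1 + 1) % N, Nat.mod_lt _ (Nat.lt_of_le_of_lt (Nat.zero_le _) i.isLt)⟩

/-- The type-1 entailment constraint `ent(ρ, s, s')`: the constraint
`({s, s'}, Θ)` where `Θ` is the set of functions `θ : {s, s'} → U` with
`(θ(s), θ(s')) ∈ ρ`. -/
def entCon {σ υ : Type} [DecidableEq σ] (U : Finset υ) (ρ : υ → υ → Prop)
    (s s' : σ) : Finset σ × Set (σ → Option υ) :=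
  ({s, s'},
   {θ | (∀ x, θ x ≠ none ↔ x ∈ ({s, s'} : Finset σ)) ∧
        (∀ x v, θ x = some v → v ∈ U) ∧
        ∃ a b, θ s = some a ∧ θ s' = some b ∧ ρ a b})

/-- The vertex users: `(v, j)` for `v ∈ V` and `1 ≤ j ≤ t+1`. -/
def UVfin (V : Type) [Fintype V] [DecidableEq V] (t : ℕ) : Finset (UserGB V) :=
  (Finset.univ ×ˢ Finset.Icc 1 (t + 1)).image Sum.inl

/-- The edge users: `(e, l)` for `e ∈ E`, with `1 ≤ l ≤ t+1` if `e ∉ B` and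
`l = 1` if `e ∈ B`. -/
def UEfin (G : SimpleGraph V) [DecidableRel G.Adj] (B : Finset (Sym2 V))
    (t : ℕ) : Finset (UserGB V) :=
  (G.edgeFinset.biUnion
    (fun e => ({e} : Finset (Sym2 V)) ×ˢ
      (if e ∈ B then ({1} : Finset ℕ) else Finset.Icc 1 (t + 1)))).image Sum.inr

/-- `incident`: relates an edge user `(e, l)` to a vertex user `(v, j)` where
`v` is one of the two endpoints of `e`. -/
def incidentRel (G : SimpleGraph V) : UserGB V → UserGB V → Prop :=
  fun a b => ∃ e l v j, a = Sum.inr (e, l) ∧ b = Sum.inl (v, j) ∧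
    e ∈ G.edgeSet ∧ v ∈ e

/-- `distinct`: relates vertex users representing distinct vertices. -/
def distinctRel (V : Type) : UserGB V → UserGB V → Prop :=
  fun a b => ∃ v i w j, a = Sum.inl (v, i) ∧ b = Sum.inl (w, j) ∧ v ≠ w

/-- The workflow authorization policy `W_{G,B}` built from a finite simple
graph `G = (V, E)` and an edge set `B ⊆ E`, with budget `t = ⌊|B|/2⌋`.
Steps: `Sum.inl i` is `sv_{i+1}` and `Sum.inr i` is `se_{i+1}` (0-indexed),
the order `≼` is equality.  Constraints:  `C₁ ∪ C₂ ∪ C₃ ∪ C_ham` where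
`C₁ = {ent(incident⁻¹, sv_i, se_i)}`, `C₂ ∪ C₃ = {ent(incident, se_i, sv_{i+1 mod N})}`,
and `C_ham = {ent(distinct, sv_i, sv_j) : i < j}`. -/
def WGB (G : SimpleGraph V) [DecidableRel G.Adj] (B : Finset (Sym2 V)) :
    WAP (Sum (Fin (Fintype.card V)) (Fin (Fintype.card V))) (UserGB V) :=
  { S := Finset.univ
    ord := Eq
    U := UVfin V (B.card / 2) ∪ UEfin G B (B.card / 2)
    A := {p | match p.1 with
              | Sum.inl _ => p.2 ∈ UVfin V (B.card / 2)
              | Sum.inr _ => p.2 ∈ UEfin G B (B.card / 2)}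
    C := {c | ∃ i : Fin (Fintype.card V),
            c = entCon (UVfin V (B.card / 2) ∪ UEfin G B (B.card / 2))
                  (fun a b => incidentRel G b a) (Sum.inl i) (Sum.inr i)} ∪
         {c | ∃ i : Fin (Fintype.card V),
            c = entCon (UVfin V (B.card / 2) ∪ UEfin G B (B.card / 2))
                  (incidentRel G) (Sum.inr i) (Sum.inl (nextFin i))} ∪
         {c | ∃ i j : Fin (Fintype.card V), i < j ∧
            c = entCon (UVfin V (B.card / 2) ∪ UEfin G B (B.card / 2))
                  (distinctRel V) (Sum.inl i) (Sum.inl j)} }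

/-- `v₁, e₁, v₂, e₂, …, v_N, e_N` is a Hamiltonian cycle of `G`: the `v_i`
are pairwise distinct and cover all of `V`, and each `e_i` is an edge of `G`
joining `v_i` and `v_{i+1}` (indices modulo `N`). -/
def IsHamCycle (G : SimpleGraph V) (v : Fin (Fintype.card V) → V)
    (e : Fin (Fintype.card V) → Sym2 V) : Prop :=
  Function.Injective v ∧ (∀ x : V, ∃ i, v i = x) ∧
  ∀ i, e i ∈ G.edgeSet ∧ e i = s(v i, v (nextFin i))

end GraphConstruction

/-! The constraints `C₁`, `C₂`, `C₃` say that the edge user at `se_i` comes from an edge joining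
the vertices of the users at `sv_i` and `sv_{i+1}`, and `C_ham` that these vertices are distinct,
so a valid plan of `W_{G,B}` is a Hamiltonian cycle `v₁ e₁ … v_N e_N` of `G` together with a choice
of copy `(v_i, j)`, `(e_i, l)` of every vertex and edge. Vertices and edges outside `B` have
`t + 1` copies, which no `t` removed users can exhaust; an edge `e ∈ B` has the single user
`(e, 1)`. Hence removing users `Δ` amounts to deleting the edges `{e ∈ B | (e, 1) ∈ Δ}`, at most
`|Δ|` of them, and deleting edges `D ⊆ B` amounts to removing the users `{(e, 1) | e ∈ D}`. -/

namespace WAP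

variable {σ υ : Type}

theorem isValidPlan_some_comp_iff [DecidableEq σ] [Fintype σ] {W : WAP σ υ}
    (hS : W.S = Finset.univ) (f : σ → υ) :
    W.IsValidPlan (some ∘ f) ↔
      (∀ s, f s ∈ W.U) ∧ (∀ s, (s, f s) ∈ W.A) ∧
        ∀ c ∈ W.C, restrictTo (some ∘ f) c.1 ∈ c.2 := by
  simp [IsValidPlan, IsPlan, IsPartialPlan, Valid, hS]

theorem IsPlan.exists_eq_some_comp [Fintype σ] {W : WAP σ υ} (hS : W.S = Finset.univ)
    {θ : σ → Option υ} (hθ : W.IsPlan θ) : ∃ f : σ → υ, θ = some ∘ f :=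
  ⟨fun s => (θ s).get (Option.isSome_iff_ne_none.2 (hθ.2 s (hS ▸ Finset.mem_univ s))),
    funext fun _ => (Option.some_get _).symm⟩

theorem avoids_some_comp_iff {f : σ → υ} {Δ : Finset υ} :
    Avoids (some ∘ f) Δ ↔ ∀ s, f s ∉ Δ := by
  simp [Avoids]

end WAP

open WAP

theorem restrictTo_some_comp_mem_entCon_iff {σ υ : Type} [DecidableEq σ] {U : Finset υ}
    {ρ : υ → υ → Prop} {s s' : σ} {f : σ → υ} (hs : f s ∈ U) (hs' : f s' ∈ U) :
    restrictTo (some ∘ f) (entCon U ρ s s').1 ∈ (entCon U ρ s s').2 ↔ ρ (f s) (f s') := by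
  have hU : ∀ x, (¬x = s → x = s') → f x ∈ U := fun x hx => by
    by_cases h : x = s
    · exact h ▸ hs
    · exact hx h ▸ hs'
  simpa [entCon, restrictTo, or_iff_not_imp_left] using fun _ : ρ (f s) (f s') => hU

theorem Finset.exists_mem_Icc_apply_notMem {α : Type*} [DecidableEq α] {Δ : Finset α} {t : ℕ}
    (hΔ : Δ.card ≤ t) {g : ℕ → α} (hg : Function.Injective g) :
    ∃ j ∈ Finset.Icc 1 (t + 1), g j ∉ Δ := by
  obtain ⟨_, hx, hxΔ⟩ := Finset.exists_mem_notMem_of_card_lt_card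
    (s := Δ) (t := (Finset.Icc 1 (t + 1)).image g)
    (by rw [Finset.card_image_of_injective _ hg, Nat.card_Icc]; omega)
  obtain ⟨j, hj, rfl⟩ := Finset.mem_image.1 hx
  exact ⟨j, hj, hxΔ⟩

theorem nextFin_ne {N : ℕ} (hN : 2 ≤ N) (i : Fin N) : nextFin i ≠ i := by
  intro h
  have hi : (i.1 + 1) % N = i.1 := congrArg Fin.val h
  rcases Nat.lt_or_ge (i.1 + 1) N with hlt | hge
  · rw [Nat.mod_eq_of_lt hlt] at hi
    omega
  · rw [show i.1 + 1 = N by omega, Nat.mod_self] at hi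
    omega

section HamCycle

variable {V : Type} [Fintype V] {G : SimpleGraph V}
  {v : Fin (Fintype.card V) → V} {e : Fin (Fintype.card V) → Sym2 V}

theorem isHamCycle_iff_injective_and_mem (hN : 2 ≤ Fintype.card V) :
    IsHamCycle G v e ↔
      Function.Injective v ∧ ∀ i, e i ∈ G.edgeSet ∧ v i ∈ e i ∧ v (nextFin i) ∈ e i := by
  constructor
  · rintro ⟨hinj, -, he⟩
    exact ⟨hinj, fun i => ⟨(he i).1, (he i).2 ▸ Sym2.mem_mk_left _ _,
      (he i).2 ▸ Sym2.mem_mk_right _ _⟩⟩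
  · rintro ⟨hinj, he⟩
    have hsurj := ((Fintype.bijective_iff_injective_and_card v).2 ⟨hinj, by simp⟩).2
    refine ⟨hinj, hsurj, fun i => ⟨(he i).1, ?_⟩⟩
    exact (Sym2.mem_and_mem_iff (hinj.ne (nextFin_ne hN i).symm)).1 ⟨(he i).2.1, (he i).2.2⟩

theorem isHamCycle_deleteEdges_iff {D : Set (Sym2 V)} :
    IsHamCycle (G.deleteEdges D) v e ↔ IsHamCycle G v e ∧ ∀ i, e i ∉ D := by
  simp only [IsHamCycle, SimpleGraph.edgeSet_deleteEdges, Set.mem_sdiff, forall_and]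
  tauto

end HamCycle

@[simp] theorem incidentRel_inr_inl {V : Type} {G : SimpleGraph V} {e : Sym2 V} {l : ℕ} {v : V}
    {j : ℕ} : incidentRel G (.inr (e, l)) (.inl (v, j)) ↔ e ∈ G.edgeSet ∧ v ∈ e := by
  simp [incidentRel]

@[simp] theorem distinctRel_inl_inl {V : Type} {v w : V} {i j : ℕ} :
    distinctRel V (.inl (v, i)) (.inl (w, j)) ↔ v ≠ w := by
  simp [distinctRel]

section WGB

variable {V : Type} [Fintype V] [DecidableEq V] {G : SimpleGraph V} [DecidableRel G.Adj]
  {B : Finset (Sym2 V)} {t : ℕ}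

@[simp] theorem inl_mem_UVfin {v : V} {j : ℕ} :
    (.inl (v, j) : UserGB V) ∈ UVfin V t ↔ j ∈ Finset.Icc 1 (t + 1) := by
  simp [UVfin]

@[simp] theorem inr_notMem_UVfin {a : Sym2 V × ℕ} : (.inr a : UserGB V) ∉ UVfin V t := by
  simp [UVfin]

@[simp] theorem inr_mem_UEfin {e : Sym2 V} {l : ℕ} :
    (.inr (e, l) : UserGB V) ∈ UEfin G B t ↔
      e ∈ G.edgeSet ∧ if e ∈ B then l = 1 else l ∈ Finset.Icc 1 (t + 1) := by
  by_cases he : e ∈ B <;> simp [UEfin, he]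

@[simp] theorem inl_notMem_UEfin {a : V × ℕ} : (.inl a : UserGB V) ∉ UEfin G B t := by
  simp [UEfin]

theorem exists_inr_mem_UEfin_notMem {Δ : Finset (UserGB V)} (hΔ : Δ.card ≤ t) {e : Sym2 V}
    (he : e ∈ G.edgeSet) (hB : e ∈ B → (.inr (e, 1) : UserGB V) ∉ Δ) :
    ∃ l, (.inr (e, l) : UserGB V) ∈ UEfin G B t ∧ .inr (e, l) ∉ Δ := by
  by_cases heB : e ∈ B
  · exact ⟨1, by simp [he, heB], hB heB⟩
  · obtain ⟨l, hl, hlΔ⟩ := Finset.exists_mem_Icc_apply_notMem hΔ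
      (g := fun l => (.inr (e, l) : UserGB V)) (fun _ _ h => by simpa using h)
    exact ⟨l, inr_mem_UEfin.2 ⟨he, by simpa [heB] using hl⟩, hlΔ⟩

def cycleAssignment {N : ℕ} (v : Fin N → V) (j : Fin N → ℕ) (e : Fin N → Sym2 V)
    (l : Fin N → ℕ) : Fin N ⊕ Fin N → UserGB V :=
  Sum.elim (fun i => .inl (v i, j i)) (fun i => .inr (e i, l i))

theorem exists_eq_cycleAssignment {N : ℕ} {f : Fin N ⊕ Fin N → UserGB V}
    (hV : ∀ i, f (.inl i) ∈ UVfin V t) (hE : ∀ i, f (.inr i) ∈ UEfin G B t) :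
    ∃ v j e l, f = cycleAssignment v j e l := by
  have hV' : ∀ i, ∃ v j, f (.inl i) = .inl (v, j) := fun i => by
    rcases h : f (.inl i) with ⟨v, j⟩ | a
    · exact ⟨v, j, rfl⟩
    · exact absurd (h ▸ hV i) inr_notMem_UVfin
  have hE' : ∀ i, ∃ e l, f (.inr i) = .inr (e, l) := fun i => by
    rcases h : f (.inr i) with a | ⟨e, l⟩
    · exact absurd (h ▸ hE i) inl_notMem_UEfin
    · exact ⟨e, l, rfl⟩
  choose v j hvj using hV'
  choose e l hel using hE'
  exact ⟨v, j, e, l, funext (Sum.forall.2 ⟨hvj, hel⟩)⟩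

theorem isValidPlan_WGB_iff (f : Fin (Fintype.card V) ⊕ Fin (Fintype.card V) → UserGB V) :
    (WGB G B).IsValidPlan (some ∘ f) ↔
      (∀ i, f (.inl i) ∈ UVfin V (B.card / 2)) ∧ (∀ i, f (.inr i) ∈ UEfin G B (B.card / 2)) ∧
      (∀ i, incidentRel G (f (.inr i)) (f (.inl i))) ∧
      (∀ i, incidentRel G (f (.inr i)) (f (.inl (nextFin i)))) ∧
      ∀ i j, i < j → distinctRel V (f (.inl i)) (f (.inl j)) := by
  rw [isValidPlan_some_comp_iff rfl]
  constructor
  · rintro ⟨hU, hA, hC⟩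
    have hent : ∀ {ρ s s'}, entCon (WGB G B).U ρ s s' ∈ (WGB G B).C → ρ (f s) (f s') :=
      fun hc => (restrictTo_some_comp_mem_entCon_iff (hU _) (hU _)).1 (hC _ hc)
    exact ⟨fun i => hA (.inl i), fun i => hA (.inr i),
      fun i => hent (ρ := fun a b => incidentRel G b a) (Or.inl (Or.inl ⟨i, rfl⟩)),
      fun i => hent (Or.inl (Or.inr ⟨i, rfl⟩)), fun i j hij => hent (Or.inr ⟨i, j, hij, rfl⟩)⟩
  · rintro ⟨hV, hE, hsv, hse, hdist⟩
    have hU : ∀ s, f s ∈ (WGB G B).U := Sum.forall.2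
      ⟨fun i => Finset.mem_union_left _ (hV i), fun i => Finset.mem_union_right _ (hE i)⟩
    refine ⟨hU, Sum.forall.2 ⟨hV, hE⟩, ?_⟩
    rintro c ((⟨i, rfl⟩ | ⟨i, rfl⟩) | ⟨i, j, hij, rfl⟩) <;>
      refine (restrictTo_some_comp_mem_entCon_iff (hU _) (hU _)).2 ?_
    exacts [hsv i, hse i, hdist i j hij]

theorem isValidPlan_WGB_cycleAssignment_iff (hN : 2 ≤ Fintype.card V)
    {v : Fin (Fintype.card V) → V} {j : Fin (Fintype.card V) → ℕ}
    {e : Fin (Fintype.card V) → Sym2 V} {l : Fin (Fintype.card V) → ℕ} :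
    (WGB G B).IsValidPlan (some ∘ cycleAssignment v j e l) ↔
      (∀ i, j i ∈ Finset.Icc 1 (B.card / 2 + 1)) ∧
      (∀ i, (.inr (e i, l i) : UserGB V) ∈ UEfin G B (B.card / 2)) ∧ IsHamCycle G v e := by
  rw [isValidPlan_WGB_iff, isHamCycle_iff_injective_and_mem hN,
    Function.injective_iff_pairwise_ne, pairwise_iff_lt]
  simp only [cycleAssignment, Sum.elim_inl, Sum.elim_inr, inl_mem_UVfin, incidentRel_inr_inl,
    distinctRel_inl_inl, Function.onFun, forall_and]
  tauto

theorem staticallyResilient_WGB_of_hamiltonian (hN : 2 ≤ Fintype.card V)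
    (hHam : ∀ D : Finset (Sym2 V), D ⊆ B → 2 * D.card ≤ B.card →
      ∃ (v : Fin (Fintype.card V) → V) (e : Fin (Fintype.card V) → Sym2 V),
        IsHamCycle (G.deleteEdges ↑D) v e) :
    (WGB G B).StaticallyResilient (B.card / 2) := by
  intro Δ _ hΔ
  set D := B.filter fun e => (.inr (e, 1) : UserGB V) ∈ Δ
  have hDΔ : D.card ≤ Δ.card := Finset.card_le_card_of_injOn (fun e => .inr (e, 1))
    (fun _ he => (Finset.mem_filter.1 he).2) (fun _ _ _ _ h => by simpa using h)
  obtain ⟨v, e, hcyc⟩ := hHam D (Finset.filter_subset _ _) (by omega)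
  obtain ⟨hcyc, heD⟩ := isHamCycle_deleteEdges_iff.1 hcyc
  choose j hj hjΔ using fun i => Finset.exists_mem_Icc_apply_notMem hΔ
    (g := fun j => (.inl (v i, j) : UserGB V)) (fun _ _ h => by simpa using h)
  choose l hl hlΔ using fun i => exists_inr_mem_UEfin_notMem (B := B) hΔ (hcyc.2.2 i).1
    (fun heB h => heD i (Finset.mem_filter.2 ⟨heB, h⟩))
  exact ⟨some ∘ cycleAssignment v j e l,
    (isValidPlan_WGB_cycleAssignment_iff hN).2 ⟨hj, hl, hcyc⟩,
    avoids_some_comp_iff.2 (Sum.forall.2 ⟨hjΔ, hlΔ⟩)⟩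

theorem hamiltonian_of_staticallyResilient_WGB (hN : 2 ≤ Fintype.card V)
    (hB : ↑B ⊆ G.edgeSet) (hres : (WGB G B).StaticallyResilient (B.card / 2))
    {D : Finset (Sym2 V)} (hDB : D ⊆ B) (hD : 2 * D.card ≤ B.card) :
    ∃ (v : Fin (Fintype.card V) → V) (e : Fin (Fintype.card V) → Sym2 V),
      IsHamCycle (G.deleteEdges ↑D) v e := by
  have hΔU : D.image (fun e => (.inr (e, 1) : UserGB V)) ⊆ (WGB G B).U :=
    Finset.image_subset_iff.2 fun e he =>
      Finset.mem_union_right _ (inr_mem_UEfin.2 ⟨hB (hDB he), by simp [hDB he]⟩)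
  obtain ⟨θ, hθ, hav⟩ := hres _ hΔU (Finset.card_image_le.trans (by omega))
  obtain ⟨f, rfl⟩ := hθ.1.exists_eq_some_comp rfl
  obtain ⟨hV, hE, -⟩ := (isValidPlan_WGB_iff f).1 hθ
  obtain ⟨v, j, e, l, rfl⟩ := exists_eq_cycleAssignment hV hE
  obtain ⟨-, hl, hcyc⟩ := (isValidPlan_WGB_cycleAssignment_iff hN).1 hθ
  refine ⟨v, e, isHamCycle_deleteEdges_iff.2 ⟨hcyc, fun i hi => ?_⟩⟩
  have hl1 : l i = 1 := by simpa [hDB hi] using (inr_mem_UEfin.1 (hl i)).2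
  exact avoids_some_comp_iff.1 hav (.inr i)
    (Finset.mem_image.2 ⟨e i, hi, by simp [cycleAssignment, hl1]⟩)

end WGB

/-- The following are equivalent: (i) for every `D ⊆ B`
with `|D| ≤ |B|/2`, the graph `G_D = (V, E ∖ D)` has a Hamiltonian cycle;
(ii) `W_{G,B}` is statically resilient for budget `t = ⌊|B|/2⌋`. -/
theorem WGB_statically_resilient_iff_dynamic_hamiltonian
    {V : Type} [Fintype V] [DecidableEq V]
    (G : SimpleGraph V) [DecidableRel G.Adj]
    (hN : 3 ≤ Fintype.card V)
    (B : Finset (Sym2 V)) (hB : ↑B ⊆ G.edgeSet) :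
    (∀ D : Finset (Sym2 V), D ⊆ B → 2 * D.card ≤ B.card →
      ∃ (v : Fin (Fintype.card V) → V) (e : Fin (Fintype.card V) → Sym2 V),
        IsHamCycle (G.deleteEdges ↑D) v e) ↔
    (WGB G B).StaticallyResilient (B.card / 2) :=
  ⟨staticallyResilient_WGB_of_hamiltonian (by omega),
    fun hres _ hDB hD => hamiltonian_of_staticallyResilient_WGB (by omega) hB hres hDB hD⟩
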